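/- Let x ∈ 𝒱 and η > 0. Consider pairs n = (n¹, n²) of nonnegative, integrable, continuous functions on [0,∞), differentiable at every a > 0 except possibly a ∈ {x_b, x_d}, satisfying, with ρ = ∫₀^∞ (n¹(a) + n²(a)) da: (n¹)′(a) = −(1_{a>x_d} + ηρ) n¹(a) and (n²)′(a) = −(1 + ηρ) n²(a) for a ∉ {x_b, x_d}, together with the boundary conditions n¹(0) = ∫₀^{min(x_b,x_d)} n¹(a) da and n²(0) = ∫₀^∞ 1_{x_d<a≤x_b} n¹(a) da + ∫₀^{x_b} n²(a) da. Then there is exactly one such n that is not identically zero; it satisfies η ρ = λ(x), and it equals (λ(x)/(η ‖N_x‖₁)) N_x, where N_x = (N¹, N²) is given by N¹(a) = e^{−(λ(x)a + max(a−x_d,0))}, N²(a) = (F₂₁/(1−F₂₂)) e^{−(1+λ(x))a} with F₂₁ = ∫₀^∞ 1_{x_d<a≤x_b} e^{−λ(x)a − max(a−x_d,0)} da, F₂₂ = ∫₀^{x_b} e^{−(1+λ(x))a} da, and ‖N_x‖₁ = ∫₀^∞ (N¹(a)+N²(a)) da. -/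

import Mathlib

open MeasureTheory Set Filter

noncomputable section

/-- The viable set `𝒱 = {(x_b, x_d) : min(x_b, x_d) > 1}`. -/
def viable : Set (ℝ × ℝ) := {x : ℝ × ℝ | 1 < min x.1 x.2}

/-- `lam` is a Malthusian parameter function on `𝒱`. -/
def IsMalthusian (lam : ℝ × ℝ → ℝ) : Prop :=
  ∀ x ∈ viable, 0 < lam x ∧ (∫ a in (0:ℝ)..(min x.1 x.2), Real.exp (-(lam x) * a)) = 1

/-- First component of the stable age distribution: `N¹(a) = e^{−(λa + max(a−x_d,0))}`. -/
def N1 (lam : ℝ × ℝ → ℝ) (x : ℝ × ℝ) (a : ℝ) : ℝ :=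
  Real.exp (-(lam x * a + max (a - x.2) 0))

/-- `F₂₁ = ∫₀^∞ 1_{x_d < a ≤ x_b} e^{−λa − max(a−x_d,0)} da`. -/
def F21 (lam : ℝ × ℝ → ℝ) (x : ℝ × ℝ) : ℝ :=
  ∫ a in Ioi (0:ℝ),
    if x.2 < a ∧ a ≤ x.1 then Real.exp (-(lam x) * a - max (a - x.2) 0) else 0

/-- `F₂₂ = ∫₀^{x_b} e^{−(1+λ)a} da`. -/
def F22 (lam : ℝ × ℝ → ℝ) (x : ℝ × ℝ) : ℝ :=
  ∫ a in (0:ℝ)..x.1, Real.exp (-(1 + lam x) * a)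

/-- Second component of the stable age distribution:
`N²(a) = (F₂₁/(1−F₂₂)) e^{−(1+λ)a}`. -/
def N2 (lam : ℝ × ℝ → ℝ) (x : ℝ × ℝ) (a : ℝ) : ℝ :=
  (F21 lam x / (1 - F22 lam x)) * Real.exp (-(1 + lam x) * a)

/-- `‖N_x‖₁ = ∫₀^∞ (N¹(a) + N²(a)) da`. -/
def normN (lam : ℝ × ℝ → ℝ) (x : ℝ × ℝ) : ℝ :=
  ∫ a in Ioi (0:ℝ), (N1 lam x a + N2 lam x a)

/-- `IsStationaryState η x n1 n2` : `(n¹,n²)` is a nonnegative, integrable, continuous pair on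
`[0,∞)` satisfying the stationary monomorphic logistic age-structured equations with
competition intensity `η`, with total mass `ρ = ∫₀^∞ (n¹+n²)`: away from `{x_b, x_d}`,
`(n¹)′ = −(1_{a>x_d} + ηρ)n¹` and `(n²)′ = −(1+ηρ)n²`, with the birth boundary
conditions. -/
def IsStationaryState (η : ℝ) (x : ℝ × ℝ) (n1 n2 : ℝ → ℝ) : Prop :=
  (∀ a ∈ Ici (0:ℝ), 0 ≤ n1 a ∧ 0 ≤ n2 a) ∧
  IntegrableOn n1 (Ici 0) ∧ IntegrableOn n2 (Ici 0) ∧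
  ContinuousOn n1 (Ici 0) ∧ ContinuousOn n2 (Ici 0) ∧
  (∀ a : ℝ, 0 < a → a ≠ x.1 → a ≠ x.2 →
    HasDerivAt n1
      (-((if x.2 < a then (1:ℝ) else 0)
          + η * (∫ b in Ioi (0:ℝ), (n1 b + n2 b))) * n1 a) a ∧
    HasDerivAt n2
      (-(1 + η * (∫ b in Ioi (0:ℝ), (n1 b + n2 b))) * n2 a) a) ∧
  n1 0 = (∫ a in (0:ℝ)..(min x.1 x.2), n1 a) ∧
  n2 0 = (∫ a in Ioi (0:ℝ), if x.2 < a ∧ a ≤ x.1 then n1 a else 0) +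
    ∫ a in (0:ℝ)..x.1, n2 a

/-!
Once the total mass `ρ` is fixed the equations are linear, so a stationary state is
`n¹(a) = n¹(0) e^{-(ηρ a + (a - x_d)⁺)}` and `n²(a) = n²(0) e^{-(1 + ηρ) a}`. On
`[0, min(x_b, x_d)]` the first profile is `n¹(0) e^{-ηρ a}`, so the first birth condition says
`n¹(0) = 0` or `∫₀^{min(x_b,x_d)} e^{-ηρ a} da = 1`; as this integral is strictly decreasing in
the rate, the latter means `ηρ = λ(x)`. The second birth condition reads
`n²(0) (1 - F₂₂) = n¹(0) F₂₁` with `F₂₂ < 1`, so `n¹(0) = 0` would kill the whole state;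
otherwise `n = n¹(0) N_x`, and `ηρ = η n¹(0) ‖N_x‖₁ = λ(x)` fixes `n¹(0)`. Conversely this
multiple of `N_x` is a stationary state.
-/

open Real

theorem eq_of_hasDerivAt_eq_zero_off_countable {g : ℝ → ℝ} {s : Set ℝ} (hs : s.Countable)
    (hc : ContinuousOn g (Ici 0)) (hd : ∀ a ∈ Ioi 0 \ s, HasDerivAt g 0 a) {a : ℝ}
    (ha : 0 ≤ a) : g a = g 0 := by
  have h := integral_eq_of_hasDerivAt_off_countable_of_le g (fun _ => (0 : ℝ)) ha hs
    (hc.mono Icc_subset_Ici_self) (fun b hb => hd b ⟨hb.1.1, hb.2⟩) intervalIntegrable_const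
  rw [intervalIntegral.integral_zero] at h
  linarith

theorem eq_mul_exp_of_hasDerivAt_off_countable {n φ ψ : ℝ → ℝ} {s : Set ℝ} (hs : s.Countable)
    (hn : ContinuousOn n (Ici 0)) (hφ : ContinuousOn φ (Ici 0)) (hφ0 : φ 0 = 0)
    (hd : ∀ a ∈ Ioi 0 \ s, HasDerivAt φ (ψ a) a ∧ HasDerivAt n (-ψ a * n a) a)
    {a : ℝ} (ha : 0 ≤ a) : n a = n 0 * exp (-φ a) := by
  have h : n a * exp (φ a) = n 0 * exp (φ 0) :=
    eq_of_hasDerivAt_eq_zero_off_countable hs (hn.mul (continuous_exp.comp_continuousOn hφ))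
      (fun b hb => by
        obtain ⟨hφb, hnb⟩ := hd b hb
        exact (hnb.mul hφb.exp).congr_deriv (by ring)) ha
  rw [hφ0, exp_zero, mul_one] at h
  rw [← h, mul_assoc, ← exp_add, add_neg_cancel, exp_zero, mul_one]

theorem hasDerivAt_max_sub_zero {a d : ℝ} (ha : a ≠ d) :
    HasDerivAt (fun b => max (b - d) 0) (if d < a then 1 else 0) a := by
  rcases ha.lt_or_gt with had | hda
  · rw [if_neg had.not_gt]
    refine (hasDerivAt_const a (0 : ℝ)).congr_of_eventuallyEq ?_
    filter_upwards [Iio_mem_nhds had] with b hb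
    exact max_eq_right (by linarith [hb.out])
  · rw [if_pos hda]
    refine ((hasDerivAt_id a).sub_const d).congr_of_eventuallyEq ?_
    filter_upwards [Ioi_mem_nhds hda] with b hb
    exact max_eq_left (by linarith [hb.out])

theorem hasDerivAt_mul_add_max_sub_zero (μ : ℝ) {a d : ℝ} (ha : a ≠ d) :
    HasDerivAt (fun b => μ * b + max (b - d) 0) ((if d < a then 1 else 0) + μ) a :=
  ((hasDerivAt_id' a).const_mul μ |>.add (hasDerivAt_max_sub_zero ha)).congr_deriv (by ring)

theorem integral_exp_neg_mul {c : ℝ} (hc : c ≠ 0) (T : ℝ) :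
    ∫ a in (0 : ℝ)..T, exp (-c * a) = (1 - exp (-c * T)) / c := by
  have hderiv (a : ℝ) : HasDerivAt (fun b => -exp (-c * b) / c) (exp (-c * a)) a := by
    refine (((hasDerivAt_id' a).const_mul (-c)).exp.neg.div_const c).congr_deriv ?_
    field_simp
  rw [intervalIntegral.integral_eq_sub_of_hasDerivAt (fun a _ => hderiv a)
    ((by fun_prop : Continuous fun a => exp (-c * a)).intervalIntegrable _ _)]
  simp only [mul_zero, exp_zero]
  ring

theorem integral_exp_neg_one_add_mul_lt_one {μ : ℝ} (hμ : 0 ≤ μ) (T : ℝ) :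
    ∫ a in (0 : ℝ)..T, exp (-(1 + μ) * a) < 1 := by
  rw [integral_exp_neg_mul (by linarith), div_lt_one (by linarith)]
  linarith [exp_pos (-(1 + μ) * T)]

theorem strictAnti_integral_exp_neg_mul {m : ℝ} (hm : 0 < m) :
    StrictAnti fun μ : ℝ => ∫ a in (0 : ℝ)..m, exp (-μ * a) := by
  intro μ ν hμν
  refine intervalIntegral.integral_lt_integral_of_continuousOn_of_le_of_exists_lt hm
    (by fun_prop) (by fun_prop) (fun a ha => exp_le_exp.2 ?_)
    ⟨m, ⟨hm.le, le_rfl⟩, exp_lt_exp.2 (by nlinarith)⟩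
  nlinarith [ha.1]

theorem integral_ite_const_mul {μ : Measure ℝ} (p : ℝ → Prop) [DecidablePred p] (c : ℝ)
    (f : ℝ → ℝ) :
    ∫ a, (if p a then c * f a else 0) ∂μ = c * ∫ a, (if p a then f a else 0) ∂μ := by
  rw [← integral_const_mul]
  congr 1 with a
  split_ifs <;> simp

section StableDistribution

variable {lam : ℝ × ℝ → ℝ} {x : ℝ × ℝ}

theorem N1_pos (a : ℝ) : 0 < N1 lam x a := exp_pos _

theorem continuous_N1 : Continuous (N1 lam x) := by
  unfold N1
  fun_prop

theorem N1_eq_of_le {a : ℝ} (ha : a ≤ x.2) : N1 lam x a = exp (-lam x * a) := by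
  rw [N1, max_eq_right (by linarith), add_zero, neg_mul]

theorem N1_zero (hx : 0 ≤ x.2) : N1 lam x 0 = 1 := by
  rw [N1_eq_of_le hx, mul_zero, exp_zero]

theorem hasDerivAt_N1 {a : ℝ} (ha : a ≠ x.2) :
    HasDerivAt (N1 lam x) (-((if x.2 < a then 1 else 0) + lam x) * N1 lam x a) a :=
  ((hasDerivAt_mul_add_max_sub_zero (lam x) ha).neg.exp).congr_deriv
    (by simp only [N1, Pi.neg_apply]; ring)

theorem integrableOn_N1 (hlam : 0 < lam x) : IntegrableOn (N1 lam x) (Ioi 0) := by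
  refine (exp_neg_integrableOn_Ioi 0 hlam).mono' continuous_N1.aestronglyMeasurable.restrict
    (ae_of_all _ fun a => ?_)
  rw [Real.norm_eq_abs, abs_of_pos (N1_pos a), N1]
  exact exp_le_exp.2 (by linarith [le_max_right (a - x.2) 0])

theorem integral_N1_eq_one (hint : ∫ a in (0 : ℝ)..(min x.1 x.2), exp (-lam x * a) = 1)
    (hx : 0 ≤ min x.1 x.2) : ∫ a in (0 : ℝ)..(min x.1 x.2), N1 lam x a = 1 := by
  rw [← hint]
  refine intervalIntegral.integral_congr fun a ha => N1_eq_of_le ?_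
  rw [uIcc_of_le hx] at ha
  exact ha.2.trans (min_le_right _ _)

theorem F21_eq_integral_N1 :
    F21 lam x = ∫ a in Ioi 0, if x.2 < a ∧ a ≤ x.1 then N1 lam x a else 0 := by
  simp only [F21, N1, neg_add, sub_eq_add_neg, neg_mul]

theorem F21_nonneg : 0 ≤ F21 lam x := by
  rw [F21_eq_integral_N1]
  exact setIntegral_nonneg measurableSet_Ioi fun a _ => by
    split_ifs
    exacts [(N1_pos a).le, le_rfl]

theorem F22_lt_one (hlam : 0 ≤ lam x) : F22 lam x < 1 :=
  integral_exp_neg_one_add_mul_lt_one hlam x.1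

theorem N2_nonneg (hlam : 0 ≤ lam x) (a : ℝ) : 0 ≤ N2 lam x a :=
  mul_nonneg (div_nonneg F21_nonneg (by linarith [F22_lt_one hlam])) (exp_pos _).le

theorem continuous_N2 : Continuous (N2 lam x) := by
  unfold N2
  fun_prop

theorem hasDerivAt_N2 (a : ℝ) : HasDerivAt (N2 lam x) (-(1 + lam x) * N2 lam x a) a :=
  (((hasDerivAt_id' a).const_mul _).exp.const_mul _).congr_deriv (by rw [N2]; ring)

theorem integrableOn_N2 (hlam : 0 < lam x) : IntegrableOn (N2 lam x) (Ioi 0) :=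
  (exp_neg_integrableOn_Ioi 0 (by linarith : (0 : ℝ) < 1 + lam x)).const_mul _

theorem N2_zero_eq_F21_add_integral_N2 (hlam : 0 ≤ lam x) :
    N2 lam x 0 = F21 lam x + ∫ a in (0 : ℝ)..x.1, N2 lam x a := by
  have : 1 - F22 lam x ≠ 0 := by linarith [F22_lt_one hlam]
  simp only [N2, intervalIntegral.integral_const_mul, mul_zero, exp_zero, mul_one]
  rw [← F22]
  field_simp
  ring

theorem normN_pos (hlam : 0 < lam x) : 0 < normN lam x := by
  have hpos (a : ℝ) : 0 < N1 lam x a + N2 lam x a := by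
    linarith [N1_pos (lam := lam) (x := x) a, N2_nonneg hlam.le (x := x) a]
  rw [normN, setIntegral_pos_iff_support_of_nonneg_ae (ae_of_all _ fun a => (hpos a).le)
    ((integrableOn_N1 hlam).add (integrableOn_N2 hlam))]
  simp [Function.support_eq_univ fun a => (hpos a).ne']

end StableDistribution

theorem min_pos_of_mem_viable {x : ℝ × ℝ} (hx : x ∈ viable) : 0 < min x.1 x.2 :=
  one_pos.trans hx

theorem fst_pos_of_mem_viable {x : ℝ × ℝ} (hx : x ∈ viable) : 0 < x.1 :=
  (min_pos_of_mem_viable hx).trans_le (min_le_left _ _)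

theorem snd_pos_of_mem_viable {x : ℝ × ℝ} (hx : x ∈ viable) : 0 < x.2 :=
  (min_pos_of_mem_viable hx).trans_le (min_le_right _ _)

def totalMass (n1 n2 : ℝ → ℝ) : ℝ := ∫ b in Ioi (0 : ℝ), (n1 b + n2 b)

theorem isStationaryState_const_mul_N {lam : ℝ × ℝ → ℝ} {x : ℝ × ℝ} (hx : x ∈ viable)
    (hlam : 0 < lam x) (hint : ∫ a in (0 : ℝ)..(min x.1 x.2), exp (-lam x * a) = 1)
    {η c : ℝ} (hc : 0 ≤ c) (hηc : η * (c * normN lam x) = lam x) :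
    IsStationaryState η x (fun a => c * N1 lam x a) (fun a => c * N2 lam x a) := by
  have hm := min_pos_of_mem_viable hx
  have hmass : η * totalMass (fun a => c * N1 lam x a) (fun a => c * N2 lam x a) = lam x := by
    simp only [totalMass, ← mul_add, integral_const_mul]
    exact hηc
  refine ⟨fun a _ => ⟨mul_nonneg hc (N1_pos a).le, mul_nonneg hc (N2_nonneg hlam.le a)⟩,
    ((integrableOn_Ici_iff_integrableOn_Ioi).2 (integrableOn_N1 hlam)).const_mul c,
    ((integrableOn_Ici_iff_integrableOn_Ioi).2 (integrableOn_N2 hlam)).const_mul c,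
    (continuous_N1.const_mul c).continuousOn, (continuous_N2.const_mul c).continuousOn,
    fun a _ _ had => ⟨?_, ?_⟩, ?_, ?_⟩
  · rw [← totalMass, hmass]
    exact ((hasDerivAt_N1 had).const_mul c).congr_deriv (by ring)
  · rw [← totalMass, hmass]
    exact ((hasDerivAt_N2 a).const_mul c).congr_deriv (by ring)
  · dsimp only
    rw [intervalIntegral.integral_const_mul, integral_N1_eq_one hint hm.le,
      N1_zero (snd_pos_of_mem_viable hx).le]
  · rw [integral_ite_const_mul, intervalIntegral.integral_const_mul, ← F21_eq_integral_N1,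
      ← mul_add, ← N2_zero_eq_F21_add_integral_N2 hlam.le]

namespace IsStationaryState

variable {η : ℝ} {x : ℝ × ℝ} {n1 n2 : ℝ → ℝ} {lam : ℝ × ℝ → ℝ}

theorem continuousOn_n1 (h : IsStationaryState η x n1 n2) : ContinuousOn n1 (Ici 0) :=
  h.2.2.2.1

theorem continuousOn_n2 (h : IsStationaryState η x n1 n2) : ContinuousOn n2 (Ici 0) :=
  h.2.2.2.2.1

theorem n1_zero_eq_integral (h : IsStationaryState η x n1 n2) :
    n1 0 = ∫ a in (0 : ℝ)..(min x.1 x.2), n1 a :=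
  h.2.2.2.2.2.2.1

theorem n2_zero_eq_integral (h : IsStationaryState η x n1 n2) :
    n2 0 = (∫ a in Ioi (0 : ℝ), if x.2 < a ∧ a ≤ x.1 then n1 a else 0) +
      ∫ a in (0 : ℝ)..x.1, n2 a :=
  h.2.2.2.2.2.2.2

theorem totalMass_nonneg (h : IsStationaryState η x n1 n2) : 0 ≤ totalMass n1 n2 :=
  setIntegral_nonneg measurableSet_Ioi fun a ha =>
    add_nonneg (h.1 a (Ioi_subset_Ici_self ha)).1 (h.1 a (Ioi_subset_Ici_self ha)).2

theorem hasDerivAt_off (h : IsStationaryState η x n1 n2) :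
    ∀ a ∈ Ioi 0 \ {x.1, x.2}, a ≠ x.2 ∧
      HasDerivAt n1 (-((if x.2 < a then 1 else 0) + η * totalMass n1 n2) * n1 a) a ∧
      HasDerivAt n2 (-(1 + η * totalMass n1 n2) * n2 a) a := by
  intro a ⟨ha, hab⟩
  simp only [mem_insert_iff, mem_singleton_iff, not_or] at hab
  exact ⟨hab.2, h.2.2.2.2.2.1 a ha hab.1 hab.2⟩

/- `lam` is arbitrary in these profile lemmas: with `lam := fun _ => η * totalMass n1 n2` they
describe every stationary state before `ηρ = λ(x)` is known. -/
theorem n1_eq_mul_N1 (h : IsStationaryState η x n1 n2) (hx : 0 ≤ x.2)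
    (hμ : η * totalMass n1 n2 = lam x) {a : ℝ} (ha : 0 ≤ a) : n1 a = n1 0 * N1 lam x a := by
  refine eq_mul_exp_of_hasDerivAt_off_countable
    (ψ := fun b => (if x.2 < b then 1 else 0) + lam x)
    ((countable_singleton x.2).insert x.1) h.continuousOn_n1
    (by fun_prop : Continuous fun b => lam x * b + max (b - x.2) 0).continuousOn
    (by simp [hx]) (fun b hb => ?_) ha
  obtain ⟨hbd, hn1, -⟩ := h.hasDerivAt_off b hb
  rw [hμ] at hn1
  exact ⟨hasDerivAt_mul_add_max_sub_zero _ hbd, hn1⟩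

theorem n2_eq_mul_exp (h : IsStationaryState η x n1 n2) (hμ : η * totalMass n1 n2 = lam x)
    {a : ℝ} (ha : 0 ≤ a) : n2 a = n2 0 * exp (-(1 + lam x) * a) := by
  rw [neg_mul]
  refine eq_mul_exp_of_hasDerivAt_off_countable (ψ := fun _ => 1 + lam x)
    ((countable_singleton x.2).insert x.1) h.continuousOn_n2
    (by fun_prop : Continuous fun b => (1 + lam x) * b).continuousOn (by simp)
    (fun b hb => ?_) ha
  obtain ⟨-, -, hn2⟩ := h.hasDerivAt_off b hb
  rw [hμ] at hn2
  exact ⟨(hasDerivAt_id' b).const_mul _ |>.congr_deriv (mul_one _), hn2⟩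

theorem n2_zero_eq (h : IsStationaryState η x n1 n2) (hx : x ∈ viable) (hlam : 0 ≤ lam x)
    (hμ : η * totalMass n1 n2 = lam x) : n2 0 = n1 0 * (F21 lam x / (1 - F22 lam x)) := by
  have hF : 1 - F22 lam x ≠ 0 := by linarith [F22_lt_one hlam]
  have hbirth : n2 0 = n1 0 * F21 lam x + n2 0 * F22 lam x := by
    rw [F21_eq_integral_N1, ← integral_ite_const_mul, F22, ← intervalIntegral.integral_const_mul]
    conv_lhs => rw [h.n2_zero_eq_integral]
    congr 1
    · refine setIntegral_congr_fun measurableSet_Ioi fun a ha => ?_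
      simp only [h.n1_eq_mul_N1 (snd_pos_of_mem_viable hx).le hμ (le_of_lt ha)]
    · refine intervalIntegral.integral_congr fun a ha => h.n2_eq_mul_exp hμ ?_
      rw [uIcc_of_le (fst_pos_of_mem_viable hx).le] at ha
      exact ha.1
  field_simp
  linarith

theorem n2_eq_mul_N2 (h : IsStationaryState η x n1 n2) (hx : x ∈ viable) (hlam : 0 ≤ lam x)
    (hμ : η * totalMass n1 n2 = lam x) {a : ℝ} (ha : 0 ≤ a) : n2 a = n1 0 * N2 lam x a := by
  rw [h.n2_eq_mul_exp hμ ha, h.n2_zero_eq hx hlam hμ, N2, mul_assoc]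

theorem eq_zero_of_n1_zero (h : IsStationaryState η x n1 n2) (hη : 0 ≤ η) (hx : x ∈ viable)
    (h0 : n1 0 = 0) : ∀ a ∈ Ici 0, n1 a = 0 ∧ n2 a = 0 := by
  have hx2 := (snd_pos_of_mem_viable hx).le
  have hμ := mul_nonneg hη h.totalMass_nonneg
  intro a ha
  rw [h.n1_eq_mul_N1 (lam := fun _ => η * totalMass n1 n2) hx2 rfl ha,
    h.n2_eq_mul_N2 (lam := fun _ => η * totalMass n1 n2) hx hμ rfl ha, h0, zero_mul, zero_mul]
  exact ⟨rfl, rfl⟩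

theorem mul_totalMass_eq_of_n1_zero_ne_zero (h : IsStationaryState η x n1 n2) (hx : x ∈ viable)
    (hint : ∫ a in (0 : ℝ)..(min x.1 x.2), exp (-lam x * a) = 1) (h0 : n1 0 ≠ 0) :
    η * totalMass n1 n2 = lam x := by
  have hm := min_pos_of_mem_viable hx
  set μ := η * totalMass n1 n2
  have hμ : ∫ a in (0 : ℝ)..(min x.1 x.2), exp (-μ * a) = 1 := by
    refine mul_left_cancel₀ h0 ?_
    rw [← intervalIntegral.integral_const_mul, mul_one]
    conv_rhs => rw [h.n1_zero_eq_integral]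
    refine (intervalIntegral.integral_congr fun a ha => ?_).symm
    rw [uIcc_of_le hm.le] at ha
    rw [h.n1_eq_mul_N1 (lam := fun _ => μ) (snd_pos_of_mem_viable hx).le rfl ha.1,
      N1_eq_of_le (ha.2.trans (min_le_right _ _))]
  exact (strictAnti_integral_exp_neg_mul hm).injective (hμ.trans hint.symm)

theorem eq_const_mul_N (h : IsStationaryState η x n1 n2) (hη : 0 ≤ η) (hx : x ∈ viable)
    (hlam : 0 < lam x) (hint : ∫ a in (0 : ℝ)..(min x.1 x.2), exp (-lam x * a) = 1)
    (hnt : ¬ ∀ a ∈ Ici (0 : ℝ), n1 a = 0 ∧ n2 a = 0) :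
    η * totalMass n1 n2 = lam x ∧ ∀ a ∈ Ici (0 : ℝ),
      n1 a = lam x / (η * normN lam x) * N1 lam x a ∧
      n2 a = lam x / (η * normN lam x) * N2 lam x a := by
  have hx2 := (snd_pos_of_mem_viable hx).le
  have hμ := h.mul_totalMass_eq_of_n1_zero_ne_zero hx hint fun h0 =>
    hnt (h.eq_zero_of_n1_zero hη hx h0)
  have hmass : totalMass n1 n2 = n1 0 * normN lam x := by
    rw [normN, ← integral_const_mul]
    refine setIntegral_congr_fun measurableSet_Ioi fun a ha => ?_
    rw [h.n1_eq_mul_N1 hx2 hμ (le_of_lt ha), h.n2_eq_mul_N2 hx hlam.le hμ (le_of_lt ha), mul_add]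
  have hc : n1 0 = lam x / (η * normN lam x) := by
    have hη0 : η ≠ 0 := left_ne_zero_of_mul (hμ ▸ hlam.ne')
    rw [eq_div_iff (mul_ne_zero hη0 (normN_pos hlam).ne'), ← hμ, hmass]
    ring
  refine ⟨hμ, fun a ha => ⟨?_, ?_⟩⟩
  · rw [← hc, h.n1_eq_mul_N1 hx2 hμ ha]
  · rw [← hc, h.n2_eq_mul_N2 hx hlam.le hμ ha]

end IsStationaryState

/-- There is exactly one nontrivial stationary state: it exists, and any nontrivial
stationary state `(n¹,n²)` satisfies `ηρ = λ(x)` and equals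
`(λ(x)/(η‖N_x‖₁)) • N_x` on `[0,∞)`. -/
theorem stationary_state_unique (lam : ℝ × ℝ → ℝ) (hlam : IsMalthusian lam)
    (η : ℝ) (hη : 0 < η) (x : ℝ × ℝ) (hx : x ∈ viable) :
    (∃ n1 n2 : ℝ → ℝ, IsStationaryState η x n1 n2 ∧
      ¬ (∀ a ∈ Ici (0:ℝ), n1 a = 0 ∧ n2 a = 0)) ∧
    (∀ n1 n2 : ℝ → ℝ, IsStationaryState η x n1 n2 →
      ¬ (∀ a ∈ Ici (0:ℝ), n1 a = 0 ∧ n2 a = 0) →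
      η * (∫ b in Ioi (0:ℝ), (n1 b + n2 b)) = lam x ∧
      ∀ a ∈ Ici (0:ℝ),
        n1 a = (lam x / (η * normN lam x)) * N1 lam x a ∧
        n2 a = (lam x / (η * normN lam x)) * N2 lam x a) := by
  obtain ⟨hlam_pos, hint⟩ := hlam x hx
  have hc : 0 < lam x / (η * normN lam x) := div_pos hlam_pos (mul_pos hη (normN_pos hlam_pos))
  refine ⟨⟨_, _, isStationaryState_const_mul_N hx hlam_pos hint hc.le ?_, fun h => ?_⟩,
    fun n1 n2 h hnt => h.eq_const_mul_N hη.le hx hlam_pos hint hnt⟩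
  · field_simp [(normN_pos hlam_pos).ne']
  · have h0 := (h 0 self_mem_Ici).1
    rw [N1_zero (snd_pos_of_mem_viable hx).le, mul_one] at h0
    exact hc.ne' h0
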